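/- Let d, m ≥ 1 with d ≤ m and d ≥ 2, and let f : EuclideanSpace ℝ (Fin d) → ℝ be a single-hidden-layer rectifier network, f x = (∑ i, a i · max 0 (⟪w i, x⟫ + b i)) + c, with parameters a, b : Fin m → ℝ, w : Fin m → EuclideanSpace ℝ (Fin d), c : ℝ. Then there exist N with (d − 1)! · N ≤ m ^ d and sets S : Fin N → Set (EuclideanSpace ℝ (Fin d)) such that each S j is convex, ⋃ j, S j = Set.univ, and for each j there exists a continuous affine map g j : EuclideanSpace ℝ (Fin d) →ᵃ[ℝ] ℝ with f x = g j x for all x ∈ S j. -/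

import Mathlib

/-!
On each closed region where every pre-activation `h i` has a prescribed sign the network is
affine, and these regions are convex. Only the regions whose open version is nonempty are
needed: moving a point a little in a direction on which no non-constant `h i` is stationary puts
it into an open region whose closure contains it.

The open regions of `m` affine functions on an `n`-dimensional space number at most
`∑_{k ≤ n} C(m, k)`: the `m`-th function splits only the regions of the others that meet its zero
hyperplane, and those are regions of `m - 1` functions on that hyperplane, of dimension `n - 1`.
Finally `(d - 1)! ∑_{k ≤ d} C(m, k) ≤ m ^ d` for `2 ≤ d ≤ m`, by induction on `m` via Pascal's rule.
-/

open scoped RealInnerProductSpace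
open Module

section SignRegions

variable {V ι : Type*} [AddCommGroup V] [Module ℝ V]

def signRegion (g : ι → V →ᵃ[ℝ] ℝ) (s : ι → Bool) : Set V :=
  ⋂ i, g i ⁻¹' if s i then Set.Ioi 0 else Set.Iio 0

def closedSignRegion (g : ι → V →ᵃ[ℝ] ℝ) (s : ι → Bool) : Set V :=
  ⋂ i, g i ⁻¹' if s i then Set.Ici 0 else Set.Iic 0

def signPatterns (g : ι → V →ᵃ[ℝ] ℝ) : Set (ι → Bool) :=
  {s | (signRegion g s).Nonempty}

theorem convex_signRegion (g : ι → V →ᵃ[ℝ] ℝ) (s : ι → Bool) : Convex ℝ (signRegion g s) :=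
  convex_iInter fun i => by
    cases s i
    exacts [(convex_Iio 0).affine_preimage (g i), (convex_Ioi 0).affine_preimage (g i)]

theorem convex_closedSignRegion (g : ι → V →ᵃ[ℝ] ℝ) (s : ι → Bool) :
    Convex ℝ (closedSignRegion g s) :=
  convex_iInter fun i => by
    cases s i
    exacts [(convex_Iic 0).affine_preimage (g i), (convex_Ici 0).affine_preimage (g i)]

theorem signRegion_comp {W : Type*} [AddCommGroup W] [Module ℝ W] (g : ι → V →ᵃ[ℝ] ℝ)
    (φ : W →ᵃ[ℝ] V) (s : ι → Bool) :
    signRegion (fun i => (g i).comp φ) s = φ ⁻¹' signRegion g s := by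
  ext x
  simp [signRegion]

theorem mem_signRegion_snoc {m : ℕ} {g : Fin (m + 1) → V →ᵃ[ℝ] ℝ} {s : Fin m → Bool}
    {b : Bool} {x : V} : x ∈ signRegion g (Fin.snoc s b) ↔
      x ∈ signRegion (Fin.init g) s ∧ g (Fin.last m) x ∈ if b then Set.Ioi 0 else Set.Iio 0 := by
  simp only [signRegion, Set.mem_iInter, Set.mem_preimage, Fin.forall_fin_succ',
    Fin.snoc_castSucc, Fin.snoc_last, Fin.init]

end SignRegions

section SignPatternCount

variable {V : Type*} [AddCommGroup V] [Module ℝ V]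

theorem AffineMap.linear_ne_zero_of_apply_lt {φ : V →ᵃ[ℝ] ℝ} {x y : V} (h : φ x < φ y) :
    φ.linear ≠ 0 := by
  intro hφ
  obtain ⟨q, hq⟩ := (AffineMap.linear_eq_zero_iff_exists_const φ).1 hφ
  simp [hq] at h

theorem AffineMap.exists_lineMap_eq_zero (φ : V →ᵃ[ℝ] ℝ) {x y : V} (hx : 0 < φ x)
    (hy : φ y < 0) : ∃ t ∈ Set.Icc (0 : ℝ) 1, φ (AffineMap.lineMap x y t) = 0 := by
  have hxy : 0 < φ x - φ y := by linarith
  refine ⟨φ x / (φ x - φ y), ⟨by positivity, (div_le_one hxy).2 (by linarith)⟩, ?_⟩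
  rw [AffineMap.apply_lineMap, AffineMap.lineMap_apply_ring']
  field_simp
  ring

theorem AffineMap.exists_setOf_eq_zero_subset_range (φ : V →ᵃ[ℝ] ℝ) (hφ : φ.linear ≠ 0) :
    ∃ ι : LinearMap.ker φ.linear →ᵃ[ℝ] V, {x | φ x = 0} ⊆ Set.range ι := by
  obtain ⟨x₀, hx₀⟩ := LinearMap.surjective hφ (-φ 0)
  have hφx₀ : φ x₀ = 0 := by simpa [hx₀] using φ.map_vadd 0 x₀
  refine ⟨(LinearMap.ker φ.linear).subtype.toAffineMap + AffineMap.const ℝ _ x₀,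
    fun x hx => ⟨⟨x - x₀, ?_⟩, by simp⟩⟩
  simpa [LinearMap.mem_ker, ← vsub_eq_sub, AffineMap.linearMap_vsub, hφx₀] using hx

theorem Nat.sum_range_succ_choose_succ (m n : ℕ) :
    ∑ k ∈ Finset.range (n + 1), (m + 1).choose k =
      ∑ k ∈ Finset.range (n + 1), m.choose k + ∑ k ∈ Finset.range n, m.choose k := by
  rw [Finset.sum_range_succ', Finset.sum_range_succ' (fun k => m.choose k)]
  simp only [Nat.choose_succ_succ, Finset.sum_add_distrib, Nat.choose_zero_right]
  ring

theorem preimage_snoc_signPatterns_inter_subset {W : Type*} [AddCommGroup W] [Module ℝ W]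
    {m : ℕ} (g : Fin (m + 1) → V →ᵃ[ℝ] ℝ) (ι : W →ᵃ[ℝ] V)
    (hι : {x | g (Fin.last m) x = 0} ⊆ Set.range ι) :
    (Fin.snoc · true) ⁻¹' signPatterns g ∩ (Fin.snoc · false) ⁻¹' signPatterns g ⊆
      signPatterns fun i => (Fin.init g i).comp ι := by
  rintro s ⟨⟨xp, hxp⟩, ⟨xn, hxn⟩⟩
  simp only [mem_signRegion_snoc, if_true, Bool.false_eq_true, if_false] at hxp hxn
  obtain ⟨t, ht, hzero⟩ := (g (Fin.last m)).exists_lineMap_eq_zero hxp.2 hxn.2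
  obtain ⟨u, hu⟩ := hι hzero
  refine ⟨u, ?_⟩
  rw [signRegion_comp, Set.mem_preimage, hu]
  exact (convex_signRegion _ s).lineMap_mem hxp.1 hxn.1 ht

theorem ncard_signPatterns_le [FiniteDimensional ℝ V] {m : ℕ} (g : Fin m → V →ᵃ[ℝ] ℝ) :
    (signPatterns g).ncard ≤ ∑ k ∈ Finset.range (finrank ℝ V + 1), m.choose k := by
  induction m generalizing V with
  | zero =>
    calc _ ≤ 1 := Set.ncard_le_one_of_subsingleton _
      _ = _ := by simp [Finset.sum_range_succ']
  | succ m ih =>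
    set A : Bool → Set (Fin m → Bool) := fun b => (Fin.snoc · b) ⁻¹' signPatterns g
    have hcover : signPatterns g ⊆ (Fin.snoc · true) '' A true ∪ (Fin.snoc · false) '' A false := by
      intro s hs
      have hs' : Fin.init s ∈ A (s (Fin.last m)) := by
        rwa [Set.mem_preimage, Fin.snoc_init_self]
      rw [← Fin.snoc_init_self s]
      cases hb : s (Fin.last m) <;> rw [hb] at hs'
      exacts [Or.inr ⟨_, hs', rfl⟩, Or.inl ⟨_, hs', rfl⟩]
    have hunion : A true ∪ A false ⊆ signPatterns (Fin.init g) := by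
      rintro s (⟨x, hx⟩ | ⟨x, hx⟩) <;> exact ⟨x, (mem_signRegion_snoc.1 hx).1⟩
    have hinter : (A true ∩ A false).ncard ≤ ∑ k ∈ Finset.range (finrank ℝ V), m.choose k := by
      rcases (A true ∩ A false).eq_empty_or_nonempty with hempty | ⟨s, ⟨xp, hxp⟩, ⟨xn, hxn⟩⟩
      · simp [hempty]
      have hlin : (g (Fin.last m)).linear ≠ 0 :=
        AffineMap.linear_ne_zero_of_apply_lt <|
          (mem_signRegion_snoc.1 hxn).2.trans (mem_signRegion_snoc.1 hxp).2
      obtain ⟨ι, hι⟩ := (g (Fin.last m)).exists_setOf_eq_zero_subset_range hlin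
      calc _ ≤ _ := Set.ncard_le_ncard (preimage_snoc_signPatterns_inter_subset g ι hι)
        _ ≤ _ := ih _
        _ = _ := by rw [Module.Dual.finrank_ker_add_one_of_ne_zero hlin]
    calc _ ≤ (A true).ncard + (A false).ncard :=
          (Set.ncard_le_ncard hcover).trans
            ((Set.ncard_union_le _ _).trans (add_le_add Set.ncard_image_le Set.ncard_image_le))
      _ = (A true ∪ A false).ncard + (A true ∩ A false).ncard :=
          (Set.ncard_union_add_ncard_inter _ _).symm
      _ ≤ ∑ k ∈ Finset.range (finrank ℝ V + 1), m.choose k +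
            ∑ k ∈ Finset.range (finrank ℝ V), m.choose k :=
          add_le_add ((Set.ncard_le_ncard hunion).trans (ih _)) hinter
      _ = _ := (Nat.sum_range_succ_choose_succ _ _).symm

end SignPatternCount

section Cover

open Filter Topology

variable {V ι : Type*} [AddCommGroup V] [Module ℝ V]

theorem eventually_add_mul_ne_zero_and_mul_nonneg {a c : ℝ} (h : a ≠ 0 ∨ c ≠ 0) :
    ∀ᶠ t in 𝓝[>] 0, a + t * c ≠ 0 ∧ 0 ≤ a * (a + t * c) := by
  by_cases ha : a = 0
  · filter_upwards [self_mem_nhdsWithin] with t (ht : 0 < t)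
    simp [ha, ht.ne', h.resolve_left (not_not.2 ha)]
  · have hlim : Tendsto (fun t : ℝ => a * (a + t * c)) (𝓝[>] 0) (𝓝 (a * a)) :=
      tendsto_nhdsWithin_of_tendsto_nhds <| by
        simpa using
          ((continuous_const.add (continuous_id.mul continuous_const)).const_mul a).tendsto 0
    filter_upwards [hlim.eventually_const_lt (mul_self_pos.2 ha)] with t ht
    exact ⟨right_ne_zero_of_mul ht.ne', ht.le⟩

theorem exists_forall_linear_apply_ne_zero [Finite ι] (L : ι → V →ₗ[ℝ] ℝ) :
    ∃ v, ∀ i, L i ≠ 0 → L i v ≠ 0 := by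
  by_contra! h
  have hcover : ⋃ i : {i // L i ≠ 0}, (LinearMap.ker (L i) : Set V) = Set.univ :=
    Set.eq_univ_of_forall fun v => by
      obtain ⟨i, hi, hv⟩ := h v
      exact Set.mem_iUnion.2 ⟨⟨i, hi⟩, hv⟩
  obtain ⟨⟨i, hi⟩, htop⟩ := Subspace.exists_eq_top_of_iUnion_eq_univ hcover
  exact hi (LinearMap.ker_eq_top.1 htop)

theorem exists_mem_signPatterns_mem_closedSignRegion [Finite ι] (g : ι → V →ᵃ[ℝ] ℝ)
    (hg : ∀ i, g i ≠ 0) (x : V) : ∃ s ∈ signPatterns g, x ∈ closedSignRegion g s := by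
  obtain ⟨v, hv⟩ := exists_forall_linear_apply_ne_zero fun i => (g i).linear
  have hline : ∀ i (t : ℝ), g i (x + t • v) = g i x + t * (g i).linear v := fun i t => by
    rw [add_comm, ← vadd_eq_add, AffineMap.map_vadd, map_smul, smul_eq_mul, vadd_eq_add, add_comm]
  have hgen : ∀ i, g i x ≠ 0 ∨ (g i).linear v ≠ 0 := fun i => by
    by_cases hlin : (g i).linear = 0
    · obtain ⟨q, hq⟩ := (AffineMap.linear_eq_zero_iff_exists_const (g i)).1 hlin
      refine Or.inl fun hx => hg i ?_
      ext y
      simpa [hq] using hx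
    · exact Or.inr (hv i hlin)
  obtain ⟨t, ht⟩ := (eventually_all.2 fun i =>
    eventually_add_mul_ne_zero_and_mul_nonneg (hgen i)).exists
  simp only [← hline] at ht
  set y := x + t • v
  have hneg : ∀ i, ¬0 < g i y → g i y < 0 := fun i hi => (not_lt.1 hi).lt_of_ne (ht i).1
  refine ⟨fun i => decide (0 < g i y), ⟨y, ?_⟩, ?_⟩ <;>
    simp only [signRegion, closedSignRegion, Set.mem_iInter, Set.mem_preimage,
      decide_eq_true_eq] <;>
    intro i <;> split_ifs with hpos
  · exact hpos
  · exact hneg i hpos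
  · exact nonneg_of_mul_nonneg_left (ht i).2 hpos
  · exact nonpos_of_mul_nonneg_left (ht i).2 (hneg i hpos)

end Cover

section ReluPieces

variable {V ι : Type*} [AddCommGroup V] [Module ℝ V]

theorem AffineMap.sum_apply {W : Type*} [AddCommGroup W] [Module ℝ W] (t : Finset ι)
    (F : ι → V →ᵃ[ℝ] W) (x : V) : (∑ i ∈ t, F i) x = ∑ i ∈ t, F i x :=
  map_sum (⟨⟨fun f => f x, rfl⟩, fun _ _ => rfl⟩ : (V →ᵃ[ℝ] W) →+ W) F t

theorem closedSignRegion_subset {G h : ι → V →ᵃ[ℝ] ℝ} (hGh : ∀ i, h i ≠ 0 → G i = h i)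
    (s : ι → Bool) : closedSignRegion G s ⊆ closedSignRegion h s := by
  simp only [closedSignRegion, Set.subset_def, Set.mem_iInter, Set.mem_preimage]
  intro x hx i
  by_cases hi : h i = 0
  · cases s i <;> simp [hi]
  · exact hGh i hi ▸ hx i

theorem exists_affineMap_eq_relu_sum_on_closedSignRegion [Fintype ι] (a : ι → ℝ)
    (h : ι → V →ᵃ[ℝ] ℝ) (c : ℝ) (s : ι → Bool) :
    ∃ g : V →ᵃ[ℝ] ℝ, ∀ x ∈ closedSignRegion h s, ∑ i, a i * max 0 (h i x) + c = g x := by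
  refine ⟨∑ i, a i • (if s i then h i else 0) + AffineMap.const ℝ V c, fun x hx => ?_⟩
  simp only [closedSignRegion, Set.mem_iInter, Set.mem_preimage] at hx
  simp only [AffineMap.coe_add, Pi.add_apply, AffineMap.sum_apply, AffineMap.coe_smul,
    Pi.smul_apply, smul_eq_mul, AffineMap.const_apply]
  congr 1
  refine Finset.sum_congr rfl fun i _ => ?_
  have hxi := hx i
  cases hsi : s i <;>
    simp only [hsi, if_true, Bool.false_eq_true, if_false, Set.mem_Ici, Set.mem_Iic] at hxi ⊢
  · simp [max_eq_left hxi]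
  · simp [max_eq_right hxi]

theorem exists_convex_cover_relu_affine_pieces [FiniteDimensional ℝ V] {m : ℕ}
    (a : Fin m → ℝ) (h : Fin m → V →ᵃ[ℝ] ℝ) (c : ℝ) :
    ∃ N ≤ ∑ k ∈ Finset.range (finrank ℝ V + 1), m.choose k, ∃ S : Fin N → Set V,
      (∀ j, Convex ℝ (S j)) ∧ ⋃ j, S j = Set.univ ∧
        ∀ j, ∃ g : V →ᵃ[ℝ] ℝ, ∀ x ∈ S j, ∑ i, a i * max 0 (h i x) + c = g x := by
  classical
  -- A unit with `h i = 0` is dead; a positive constant in its place keeps every point in the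
  -- closure of some nonempty open region.
  set G : Fin m → V →ᵃ[ℝ] ℝ := fun i => if h i = 0 then AffineMap.const ℝ V 1 else h i
  have hG : ∀ i, G i ≠ 0 := fun i => by
    by_cases hi : h i = 0
    · simp only [G, hi, if_true]
      exact fun h1 => one_ne_zero (congrArg (· 0) h1)
    · simp [G, hi]
  have hGh : ∀ i, h i ≠ 0 → G i = h i := fun i hi => if_neg hi
  set e := (Finite.equivFin (signPatterns G)).symm
  refine ⟨Nat.card (signPatterns G), ?_, fun j => closedSignRegion G (e j),
    fun j => convex_closedSignRegion _ _, ?_, fun j => ?_⟩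
  · rw [Nat.card_coe_set_eq]
    exact ncard_signPatterns_le G
  · refine Set.eq_univ_of_forall fun x => ?_
    obtain ⟨s, hs, hx⟩ := exists_mem_signPatterns_mem_closedSignRegion G hG x
    refine Set.mem_iUnion.2 ⟨e.symm ⟨s, hs⟩, ?_⟩
    rwa [Equiv.apply_symm_apply]
  · obtain ⟨g, hg⟩ := exists_affineMap_eq_relu_sum_on_closedSignRegion a h c (e j)
    exact ⟨g, fun x hx => hg x (closedSignRegion_subset hGh _ hx)⟩

end ReluPieces

section FactorialBound

open Nat

theorem Nat.pow_succ_add_succ_mul_pow_le (x n : ℕ) :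
    x ^ (n + 1) + (n + 1) * x ^ n ≤ (x + 1) ^ (n + 1) := by
  induction n with
  | zero => simp
  | succ n ih =>
    calc x ^ (n + 2) + (n + 2) * x ^ (n + 1)
        ≤ x ^ (n + 2) + (n + 2) * x ^ (n + 1) + (n + 1) * x ^ n := Nat.le_add_right _ _
      _ = (x ^ (n + 1) + (n + 1) * x ^ n) * (x + 1) := by ring
      _ ≤ (x + 1) ^ (n + 2) := by rw [pow_succ _ (n + 1)]; exact Nat.mul_le_mul_right _ ih

theorem Nat.factorial_mul_two_pow_le {n : ℕ} (hn : 1 ≤ n) :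
    n ! * 2 ^ (n + 1) ≤ (n + 1) ^ (n + 1) := by
  induction n, hn using Nat.le_induction with
  | base => decide
  | succ n hn ih =>
    have htwice : 2 * (n + 1) ^ (n + 1) ≤ (n + 2) ^ (n + 1) :=
      calc 2 * (n + 1) ^ (n + 1) = (n + 1) ^ (n + 1) + (n + 1) * (n + 1) ^ n := by ring
        _ ≤ (n + 2) ^ (n + 1) := Nat.pow_succ_add_succ_mul_pow_le (n + 1) n
    calc (n + 1)! * 2 ^ (n + 2) = (n + 1) * (2 * (n ! * 2 ^ (n + 1))) := by
          rw [Nat.factorial_succ]; ring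
      _ ≤ (n + 1) * (2 * (n + 1) ^ (n + 1)) := by gcongr
      _ ≤ (n + 2) * (n + 2) ^ (n + 1) := by gcongr; omega
      _ = (n + 2) ^ (n + 2) := by ring

theorem Nat.factorial_mul_sum_range_choose_le_pow {d m : ℕ} (hd : 2 ≤ d) (hdm : d ≤ m) :
    (d - 1)! * ∑ k ∈ Finset.range (d + 1), m.choose k ≤ m ^ d := by
  induction m generalizing d with
  | zero => omega
  | succ m ih =>
    obtain ⟨n, rfl⟩ : ∃ n, d = n + 1 := ⟨d - 1, by omega⟩
    rw [Nat.add_sub_cancel]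
    rcases (show n + 1 ≤ m ∨ n = m by omega) with hle | rfl
    · have hlower : n ! * ∑ k ∈ Finset.range (n + 1), m.choose k ≤ (n + 1) * m ^ n := by
        rcases (show n = 1 ∨ 2 ≤ n by omega) with rfl | hn
        · simp [Finset.sum_range_succ]; omega
        · obtain ⟨n, rfl⟩ : ∃ k, n = k + 1 := ⟨n - 1, by omega⟩
          have := ih hn (by omega)
          rw [Nat.add_sub_cancel] at this
          calc (n + 1)! * ∑ k ∈ Finset.range (n + 2), m.choose k
              = (n + 1) * (n ! * ∑ k ∈ Finset.range (n + 2), m.choose k) := by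
                rw [Nat.factorial_succ, mul_assoc]
            _ ≤ (n + 2) * m ^ (n + 1) := by gcongr; omega
      calc n ! * ∑ k ∈ Finset.range (n + 1 + 1), (m + 1).choose k
          = n ! * ∑ k ∈ Finset.range (n + 2), m.choose k +
              n ! * ∑ k ∈ Finset.range (n + 1), m.choose k := by
            rw [Nat.sum_range_succ_choose_succ, mul_add]
        _ ≤ m ^ (n + 1) + (n + 1) * m ^ n := by
            have := ih hd hle
            rw [Nat.add_sub_cancel] at this
            gcongr
        _ ≤ (m + 1) ^ (n + 1) := Nat.pow_succ_add_succ_mul_pow_le m n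
    · rw [Nat.sum_range_choose]
      exact Nat.factorial_mul_two_pow_le (by omega)

end FactorialBound

theorem shl_rectifier_piecewise_affine_factorial_bound_general (d m : ℕ)
    (hd : 2 ≤ d) (hdm : d ≤ m)
    (a b : Fin m → ℝ) (w : Fin m → EuclideanSpace ℝ (Fin d)) (c : ℝ)
    (f : EuclideanSpace ℝ (Fin d) → ℝ)
    (hf : ∀ x, f x = (∑ i, a i * max 0 (⟪w i, x⟫ + b i)) + c) :
    ∃ N : ℕ, Nat.factorial (d - 1) * N ≤ m ^ d ∧
      ∃ S : Fin N → Set (EuclideanSpace ℝ (Fin d)),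
        (∀ j, Convex ℝ (S j)) ∧ (⋃ j, S j) = Set.univ ∧
        ∀ j, ∃ g : EuclideanSpace ℝ (Fin d) →ᵃ[ℝ] ℝ, ∀ x ∈ S j, f x = g x := by
  obtain ⟨N, hN, S, hconvex, hcover, hpieces⟩ := exists_convex_cover_relu_affine_pieces a
    (fun i => (innerₛₗ ℝ (w i)).toAffineMap + AffineMap.const ℝ _ (b i)) c
  rw [finrank_euclideanSpace_fin] at hN
  refine ⟨N, (Nat.mul_le_mul_left _ hN).trans (Nat.factorial_mul_sum_range_choose_le_pow hd hdm),
    S, hconvex, hcover, fun j => ?_⟩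
  obtain ⟨g, hg⟩ := hpieces j
  exact ⟨g, fun x hx => by rw [hf, ← hg x hx]; simp⟩

theorem shl_rectifier_piecewise_affine_factorial_bound (d m : ℕ)
    (hd : 2 ≤ d) (hm : 1 ≤ m) (hdm : d ≤ m)
    (a b : Fin m → ℝ) (w : Fin m → EuclideanSpace ℝ (Fin d)) (c : ℝ)
    (f : EuclideanSpace ℝ (Fin d) → ℝ)
    (hf : ∀ x, f x = (∑ i, a i * max 0 (⟪w i, x⟫ + b i)) + c) :
    ∃ N : ℕ, Nat.factorial (d - 1) * N ≤ m ^ d ∧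
      ∃ S : Fin N → Set (EuclideanSpace ℝ (Fin d)),
        (∀ j, Convex ℝ (S j)) ∧ (⋃ j, S j) = Set.univ ∧
        ∀ j, ∃ g : EuclideanSpace ℝ (Fin d) →ᵃ[ℝ] ℝ, ∀ x ∈ S j, f x = g x :=
  shl_rectifier_piecewise_affine_factorial_bound_general d m hd hdm a b w c f hf
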